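/- For every ε > 0 the following holds. Fix d, q, N ∈ ℕ, δ > 0, R > 0, an embedding dimension d_p, and vectors p_{−q}, p_{−q+1}, …, p_N ∈ ℝ^{d_p} with ‖p_s‖ ≤ 1 for all s and ⟨p_s, p_s⟩ > ⟨p_s, p_{s′}⟩ + δ for all s ≠ s′. Set D = (q+1)d + (q+1)d_p + 1. There exist parameters of a one-layer q-head transformer TF acting on ℝ^{D×(N+1)} such that for all x_0, x_1, …, x_N ∈ ℝ^d with ‖x_t‖ ≤ R (with the convention x_s = 0 for s < 0), letting Z ∈ ℝ^{D×(N+1)} be the matrix whose t-th column (t = 0, 1, …, N) is (x_t; 0_{qd}; p_t; p_{t−1}; …; p_{t−q}; t), every entry of TF(Z) differs by at most ε from the matrix whose t-th column is (x_t; x_{t−1}; x_{t−2}; …; x_{t−q}; p_t; p_{t−1}; …; p_{t−q}; t). In other words, a one-layer transformer with q heads can copy, to arbitrary accuracy, the feature vectors of the previous q tokens into the current token. -/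

import Mathlib

open Matrix
open scoped RealInnerProductSpace

/-- Column-wise softmax of a matrix of attention scores. -/
noncomputable def softmaxCol {m n : Type} [Fintype m] (Z : Matrix m n ℝ) : Matrix m n ℝ :=
  Matrix.of fun j l => Real.exp (Z j l) / ∑ k, Real.exp (Z k l)

/-- Multi-head softmax attention layer (with residual connection),
`Attn(X) = X + Σᵢ W_V⁽ⁱ⁾ X · softmax(Xᵀ W_K⁽ⁱ⁾ᵀ W_Q⁽ⁱ⁾ X)`. -/
noncomputable def attnLayer {D n dk : Type} [Fintype D] [Fintype n] [Fintype dk] {h : ℕ}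
    (WV : Fin h → Matrix D D ℝ) (WK WQ : Fin h → Matrix dk D ℝ)
    (X : Matrix D n ℝ) : Matrix D n ℝ :=
  X + ∑ i, WV i * X * softmaxCol (Xᵀ * (WK i)ᵀ * WQ i * X)

/-- One transformer layer:
`TF(X) = Attn(X) + W₂ ReLU(W₁ Attn(X) + b₁ 1ₙᵀ) + b₂ 1ₙᵀ`. -/
noncomputable def tfLayer {D n dk F : Type} [Fintype D] [Fintype n] [Fintype dk] [Fintype F]
    {h : ℕ} (WV : Fin h → Matrix D D ℝ) (WK WQ : Fin h → Matrix dk D ℝ)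
    (W1 : Matrix F D ℝ) (b1 : F → ℝ) (W2 : Matrix D F ℝ) (b2 : D → ℝ)
    (X : Matrix D n ℝ) : Matrix D n ℝ :=
  attnLayer WV WK WQ X
    + W2 * Matrix.of (fun i l => max ((W1 * attnLayer WV WK WQ X) i l + b1 i) 0)
    + Matrix.of fun i _ => b2 i

/-- Row index type: `D = (q+1)d + (q+1)d_p + 1` coordinates, split into the current-feature
block (size `d`), `q` feature blocks of size `d` (initially zero, to be filled with the
previous `q` features), `q+1` positional blocks of size `d_p`, and one scalar coordinate. -/
abbrev Row3 (d q dp : ℕ) := Fin d ⊕ ((Fin q × Fin d) ⊕ ((Fin (q + 1) × Fin dp) ⊕ Unit))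

/-- The features extended by zero to negative times: `x_s = 0` for `s < 0`. -/
noncomputable def xext {d N : ℕ} (x : Fin (N + 1) → Fin d → ℝ) : ℤ → Fin d → ℝ :=
  fun s => if hs : 0 ≤ s ∧ s < (N : ℤ) + 1 then x ⟨s.toNat, by omega⟩ else 0

/-- The input matrix `Z` of the copying lemma: the `t`-th column is
`(x_t; 0_{qd}; p_t; p_{t−1}; …; p_{t−q}; t)`. -/
noncomputable def promptCopyIn {d q dp N : ℕ} (x : Fin (N + 1) → Fin d → ℝ)
    (p : ℤ → Fin dp → ℝ) : Matrix (Row3 d q dp) (Fin (N + 1)) ℝ :=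
  Matrix.of fun i t =>
    Sum.elim (fun r => x t r)
      (Sum.elim (fun _ => 0)
        (Sum.elim (fun kr : Fin (q + 1) × Fin dp => p ((t : ℤ) - (kr.1 : ℤ)) kr.2)
          (fun _ => (t : ℝ)))) i

/-- The target output of the copying lemma: the `t`-th column is
`(x_t; x_{t−1}; …; x_{t−q}; p_t; p_{t−1}; …; p_{t−q}; t)` (with `x_s = 0` for `s < 0`). -/
noncomputable def promptCopyOut {d q dp N : ℕ} (x : Fin (N + 1) → Fin d → ℝ)
    (p : ℤ → Fin dp → ℝ) : Matrix (Row3 d q dp) (Fin (N + 1)) ℝ :=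
  Matrix.of fun i t =>
    Sum.elim (fun r => x t r)
      (Sum.elim (fun kr : Fin q × Fin d => xext x ((t : ℤ) - ((kr.1 : ℤ) + 1)) kr.2)
        (Sum.elim (fun kr : Fin (q + 1) × Fin dp => p ((t : ℤ) - (kr.1 : ℤ)) kr.2)
          (fun _ => (t : ℝ)))) i

namespace CopyLemma

variable {d q dp N : ℕ}

def rMid (k : Fin q) (r : Fin d) : Row3 d q dp := Sum.inr (Sum.inl (k, r))
def rPos (k : Fin (q+1)) (j : Fin dp) : Row3 d q dp := Sum.inr (Sum.inr (Sum.inl (k, j)))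
def rT : Row3 d q dp := Sum.inr (Sum.inr (Sum.inr ()))

noncomputable def wV (i : Fin q) : Matrix (Row3 d q dp) (Row3 d q dp) ℝ :=
  Matrix.of fun a b =>
    Sum.elim (fun _ => (0:ℝ))
      (Sum.elim (fun kr : Fin q × Fin d =>
          if kr.1 = i ∧ b = Sum.inl kr.2 then 1 else 0)
        (fun _ => 0)) a

noncomputable def wKmat : Matrix (Fin dp) (Row3 d q dp) ℝ :=
  Matrix.of fun j b => if b = rPos 0 j then 1 else 0

noncomputable def wQmat (c : ℝ) (i : Fin q) : Matrix (Fin dp) (Row3 d q dp) ℝ :=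
  Matrix.of fun j b => if b = rPos i.succ j then c else 0

lemma wK_mul_apply (X : Matrix (Row3 d q dp) (Fin (N+1)) ℝ) (j : Fin dp) (s : Fin (N+1)) :
    ((wKmat (d:=d) (q:=q) (dp:=dp)) * X) j s = X (rPos 0 j) s := by
  simp [wKmat, Matrix.mul_apply, ite_mul]

lemma wQ_mul_apply (c : ℝ) (i : Fin q) (X : Matrix (Row3 d q dp) (Fin (N+1)) ℝ)
    (j : Fin dp) (s : Fin (N+1)) :
    ((wQmat (d:=d) (dp:=dp) c i) * X) j s = c * X (rPos i.succ j) s := by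
  simp [wQmat, Matrix.mul_apply, ite_mul]

lemma score_apply (c : ℝ) (i : Fin q) (X : Matrix (Row3 d q dp) (Fin (N+1)) ℝ)
    (s t : Fin (N+1)) :
    (Xᵀ * (wKmat (d:=d) (q:=q) (dp:=dp))ᵀ * wQmat (d:=d) (dp:=dp) c i * X) s t
      = c * ∑ j, X (rPos 0 j) s * X (rPos i.succ j) t := by
  have h : Xᵀ * (wKmat (d:=d) (q:=q) (dp:=dp))ᵀ * wQmat (d:=d) (dp:=dp) c i * X
      = (wKmat (d:=d) (q:=q) (dp:=dp) * X)ᵀ * (wQmat (d:=d) (dp:=dp) c i * X) := by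
    rw [Matrix.transpose_mul, Matrix.mul_assoc]
  rw [h, Matrix.mul_apply, Finset.mul_sum]
  refine Finset.sum_congr rfl fun j _ => ?_
  rw [Matrix.transpose_apply, wK_mul_apply, wQ_mul_apply]; ring


section Softmax
variable {m n : Type} [Fintype m] [Nonempty m] (Z : Matrix m n ℝ)

lemma softmax_pos (j : m) (l : n) : 0 < softmaxCol Z j l :=
  div_pos (Real.exp_pos _) (Finset.sum_pos (fun k _ => Real.exp_pos _) Finset.univ_nonempty)

lemma softmax_sum (l : n) : ∑ j, softmaxCol Z j l = 1 := by
  have h : (0:ℝ) < ∑ k, Real.exp (Z k l) :=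
    Finset.sum_pos (fun k _ => Real.exp_pos _) Finset.univ_nonempty
  simp only [softmaxCol, Matrix.of_apply]
  rw [← Finset.sum_div, div_self h.ne']

lemma softmax_le (j j' : m) (l : n) :
    softmaxCol Z j l ≤ Real.exp (Z j l - Z j' l) := by
  have h1 : Real.exp (Z j' l) ≤ ∑ k, Real.exp (Z k l) :=
    Finset.single_le_sum (f := fun k => Real.exp (Z k l))
      (fun k _ => (Real.exp_pos _).le) (Finset.mem_univ j')
  calc softmaxCol Z j l = Real.exp (Z j l) / ∑ k, Real.exp (Z k l) := rfl
    _ ≤ Real.exp (Z j l) / Real.exp (Z j' l) :=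
        div_le_div_of_nonneg_left (Real.exp_pos _).le (Real.exp_pos _) h1
    _ = Real.exp (Z j l - Z j' l) := by rw [Real.exp_sub]

end Softmax

section Attn

variable (c : ℝ) (x : Fin (N + 1) → Fin d → ℝ) (p : ℤ → Fin dp → ℝ)

/-- The attention output matrix of our construction. -/
noncomputable def A : Matrix (Row3 d q dp) (Fin (N+1)) ℝ :=
  attnLayer (wV (d:=d) (q:=q) (dp:=dp)) (fun _ => wKmat) (wQmat c)
    (promptCopyIn x p)

/-- softmax weights of head `k` : weight on source column `s` for target column `t`. -/
noncomputable def W (k : Fin q) : Matrix (Fin (N+1)) (Fin (N+1)) ℝ :=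
  softmaxCol ((promptCopyIn (q:=q) x p)ᵀ * (wKmat (d:=d) (q:=q) (dp:=dp))ᵀ
    * wQmat (d:=d) (dp:=dp) c k * promptCopyIn x p)

lemma wV_mul_top (i : Fin q) (X : Matrix (Row3 d q dp) (Fin (N+1)) ℝ) (r : Fin d)
    (s : Fin (N+1)) : (wV (d:=d) (dp:=dp) i * X) (Sum.inl r) s = 0 := by
  simp [wV, Matrix.mul_apply]

lemma wV_mul_pos (i : Fin q) (X : Matrix (Row3 d q dp) (Fin (N+1)) ℝ)
    (a : (Fin (q + 1) × Fin dp) ⊕ Unit) (s : Fin (N+1)) :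
    (wV (d:=d) (dp:=dp) i * X) (Sum.inr (Sum.inr a)) s = 0 := by
  simp [wV, Matrix.mul_apply]

lemma wV_mul_mid (i : Fin q) (X : Matrix (Row3 d q dp) (Fin (N+1)) ℝ) (k : Fin q) (r : Fin d)
    (s : Fin (N+1)) :
    (wV (d:=d) (dp:=dp) i * X) (rMid k r) s = if k = i then X (Sum.inl r) s else 0 := by
  by_cases hk : k = i
  · subst hk
    simp [wV, rMid, Matrix.mul_apply, ite_mul]
  · simp [wV, rMid, Matrix.mul_apply, hk]

noncomputable def VX (i : Fin q) : Matrix (Row3 d q dp) (Fin (N+1)) ℝ :=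
  wV (d:=d) (dp:=dp) i * promptCopyIn (q:=q) x p

lemma VX_top (i : Fin q) (r : Fin d) (s : Fin (N+1)) : VX x p i (Sum.inl r) s = 0 :=
  wV_mul_top i _ r s

lemma VX_pos (i : Fin q) (a : (Fin (q + 1) × Fin dp) ⊕ Unit) (s : Fin (N+1)) :
    VX x p i (Sum.inr (Sum.inr a)) s = 0 :=
  wV_mul_pos i _ a s

lemma VX_mid (i k : Fin q) (r : Fin d) (s : Fin (N+1)) :
    VX x p i (rMid k r) s = if k = i then x s r else 0 := by
  rw [VX, wV_mul_mid]
  simp [promptCopyIn]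

lemma A_apply (a : Row3 d q dp) (t : Fin (N+1)) :
    A c x p a t = promptCopyIn (q:=q) x p a t
      + ∑ i, ∑ s, VX x p i a s * W c x p i s t := by
  simp only [A, attnLayer, W, VX, Matrix.add_apply, Matrix.sum_apply, Matrix.mul_apply]
  rfl

lemma A_top (r : Fin d) (t : Fin (N+1)) :
    A (d:=d) (q:=q) (dp:=dp) c x p (Sum.inl r) t = x t r := by
  rw [A_apply]
  simp [VX_top, promptCopyIn]

lemma A_pos (k : Fin (q+1)) (j : Fin dp) (t : Fin (N+1)) :
    A c x p (rPos k j) t = p ((t : ℤ) - (k : ℤ)) j := by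
  rw [A_apply]
  simp [rPos, VX_pos, promptCopyIn]

lemma A_t (t : Fin (N+1)) : A c x p (rT (d:=d) (q:=q) (dp:=dp)) t = (t : ℝ) := by
  rw [A_apply]
  simp [rT, VX_pos, promptCopyIn]

lemma A_mid (k : Fin q) (r : Fin d) (t : Fin (N+1)) :
    A c x p (rMid k r) t = ∑ s, x s r * W c x p k s t := by
  rw [A_apply]
  simp only [VX_mid, ite_mul, zero_mul]
  rw [Finset.sum_comm]
  simp [promptCopyIn, rMid]


lemma W_pos (k : Fin q) (s t : Fin (N+1)) : 0 < W c x p k s t :=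
  softmax_pos _ s t

lemma W_sum (k : Fin q) (t : Fin (N+1)) : ∑ s, W c x p k s t = 1 :=
  softmax_sum _ t

lemma score_in (k : Fin q) (s t : Fin (N+1)) :
    ((promptCopyIn (q:=q) x p)ᵀ * (wKmat (d:=d) (q:=q) (dp:=dp))ᵀ
      * wQmat (d:=d) (dp:=dp) c k * promptCopyIn (q:=q) x p) s t
    = c * ∑ j, p (s : ℤ) j * p ((t : ℤ) - ((k : ℕ) + 1)) j := by
  rw [score_apply]
  congr 1

lemma W_le (k : Fin q) (s s' t : Fin (N+1)) :
    W c x p k s t ≤ Real.exp ((c * ∑ j, p (s : ℤ) j * p ((t : ℤ) - ((k : ℕ) + 1)) j)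
      - (c * ∑ j, p (s' : ℤ) j * p ((t : ℤ) - ((k : ℕ) + 1)) j)) := by
  have h := softmax_le ((promptCopyIn (q:=q) x p)ᵀ * (wKmat (d:=d) (q:=q) (dp:=dp))ᵀ
      * wQmat (d:=d) (dp:=dp) c k * promptCopyIn (q:=q) x p) s s' t
  rw [score_in, score_in] at h
  exact h


end Attn


/-! ### Feed-forward construction -/

section FF

def cMid : Fin 4 → ℝ := ![1, 0, 1, -1]
def cT : Fin 4 → ℝ := ![1, 1, 0, 0]
def cOut : Fin 4 → ℝ := ![1, -1, -1, 1]

variable (M : ℝ)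

noncomputable def w1' (y : (Fin q × Fin d) × Fin 4) (b : Row3 d q dp) : ℝ :=
  (if b = rMid y.1.1 y.1.2 then cMid y.2 else 0) + (if b = rT then M * cT y.2 else 0)

noncomputable def b1' (y : (Fin q × Fin d) × Fin 4) : ℝ :=
  M * cT y.2 * (1/2 - (((y.1.1 : ℕ) : ℝ) + 1))

noncomputable def w2' (a : Row3 d q dp) (y : (Fin q × Fin d) × Fin 4) : ℝ :=
  if a = rMid y.1.1 y.1.2 then cOut y.2 else 0

def eF : ((Fin q × Fin d) × Fin 4) ≃ Fin (q * d * 4) :=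
  (Equiv.prodCongr finProdFinEquiv (Equiv.refl (Fin 4))).trans finProdFinEquiv

noncomputable def W1mat : Matrix (Fin (q * d * 4)) (Row3 d q dp) ℝ :=
  Matrix.of fun f b => w1' (dp:=dp) M (eF.symm f) b

noncomputable def b1vec : Fin (q * d * 4) → ℝ := fun f => b1' (q:=q) (d:=d) M (eF.symm f)

noncomputable def W2mat : Matrix (Row3 d q dp) (Fin (q * d * 4)) ℝ :=
  Matrix.of fun a f => w2' a (eF.symm f)

variable (c : ℝ) (x : Fin (N + 1) → Fin d → ℝ) (p : ℤ → Fin dp → ℝ)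

/-- pre-activation value of neuron `y` at column `t`. -/
noncomputable def pre (y : (Fin q × Fin d) × Fin 4) (t : Fin (N+1)) : ℝ :=
  cMid y.2 * A c x p (rMid y.1.1 y.1.2) t
    + M * cT y.2 * ((t : ℝ) + (1/2 - (((y.1.1 : ℕ) : ℝ) + 1)))

lemma pre_eq (y : (Fin q × Fin d) × Fin 4) (t : Fin (N+1)) :
    (∑ b, w1' (dp:=dp) M y b * A c x p b t) + b1' M y = pre M c x p y t := by
  have h1 : (∑ b, (if b = rMid y.1.1 y.1.2 then cMid y.2 else 0) * A c x p b t)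
      = cMid y.2 * A c x p (rMid y.1.1 y.1.2) t := by
    simp [ite_mul]
  have h2 : (∑ b, (if b = rT (d:=d) (q:=q) (dp:=dp) then M * cT y.2 else 0) * A c x p b t)
      = M * cT y.2 * (t : ℝ) := by
    simp [ite_mul, A_t]
  simp only [w1', add_mul, Finset.sum_add_distrib, h1, h2, b1', pre]
  ring

/-- The transformer output of our construction. -/
noncomputable def TF : Matrix (Row3 d q dp) (Fin (N+1)) ℝ :=
  tfLayer (wV (d:=d) (q:=q) (dp:=dp)) (fun _ => wKmat) (wQmat c)
    (W1mat M) (b1vec M) W2mat 0 (promptCopyIn x p)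

lemma TF_apply (a : Row3 d q dp) (t : Fin (N+1)) :
    TF M c x p a t = A c x p a t
      + ∑ y : (Fin q × Fin d) × Fin 4, w2' a y * max (pre M c x p y t) 0 := by
  have hattn : attnLayer (wV (d:=d) (q:=q) (dp:=dp)) (fun _ => wKmat) (wQmat c)
      (promptCopyIn x p) = A c x p := rfl
  simp only [TF, tfLayer, hattn, Matrix.add_apply, Matrix.of_apply, Pi.zero_apply, add_zero]
  congr 1
  rw [Matrix.mul_apply]
  rw [← Equiv.sum_comp (eF (q:=q) (d:=d)).symm
    (fun y => w2' a y * max (pre M c x p y t) 0)]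
  refine Finset.sum_congr rfl fun f _ => ?_
  simp only [Matrix.of_apply]
  have h : (W1mat (d:=d) (q:=q) (dp:=dp) M * A (q:=q) c x p) f t + b1vec M f = pre M c x p (eF.symm f) t := by
    rw [Matrix.mul_apply, ← pre_eq]
    rfl
  rw [h]
  rfl

lemma TF_top (r : Fin d) (t : Fin (N+1)) :
    TF (d:=d) (q:=q) (dp:=dp) M c x p (Sum.inl r) t = x t r := by
  rw [TF_apply, A_top]
  simp [w2', rMid]

lemma TF_pos (k : Fin (q+1)) (j : Fin dp) (t : Fin (N+1)) :
    TF M c x p (rPos k j) t = p ((t : ℤ) - (k : ℤ)) j := by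
  rw [TF_apply, A_pos]
  simp [w2', rMid, rPos]

lemma TF_t (t : Fin (N+1)) : TF M c x p (rT (d:=d) (q:=q) (dp:=dp)) t = (t : ℝ) := by
  rw [TF_apply, A_t]
  simp [w2', rMid, rT]

lemma TF_mid (k : Fin q) (r : Fin d) (t : Fin (N+1)) :
    TF M c x p (rMid k r) t
      = A c x p (rMid k r) t
        + (max (A c x p (rMid k r) t + M * ((t : ℝ) + 1/2 - ((k : ℕ) + 1))) 0
          - max (M * ((t : ℝ) + 1/2 - ((k : ℕ) + 1))) 0
          - max (A c x p (rMid k r) t) 0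
          + max (-(A c x p (rMid k r) t)) 0) := by
  rw [TF_apply]
  congr 1
  rw [Fintype.sum_prod_type]
  have hker : ∀ kr : Fin q × Fin d,
      (∑ j : Fin 4, w2' (dp:=dp) (rMid k r) (kr, j) * max (pre M c x p (kr, j) t) 0)
        = if (k, r) = kr then
            ∑ j : Fin 4, cOut j * max (pre M c x p (kr, j) t) 0 else 0 := by
    intro kr
    by_cases hkr : (k, r) = kr
    · subst hkr
      simp [w2']
    · have : rMid (d:=d) (q:=q) (dp:=dp) k r ≠ rMid kr.1 kr.2 := by
        simp only [rMid, ne_eq, Sum.inr.injEq, Sum.inl.injEq]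
        intro h
        exact hkr (by rw [h])
      simp [w2', this, hkr]
  simp only [hker, Finset.sum_ite_eq, Finset.mem_univ, if_true]
  rw [Fin.sum_univ_four]
  simp only [pre, cOut, cMid, cT]
  norm_num [Matrix.cons_val_two, Matrix.cons_val_three]
  ring_nf
end FF

end CopyLemma

open CopyLemma in
/-- **The copying lemma** (paper's Lemma A.3): given quasi-orthogonal positional embeddings
`p_{−q}, …, p_N` (norm at most 1, with inner-product gap `δ`), a one-layer transformer with
`q` heads can copy, to arbitrary accuracy on bounded inputs, the feature vectors of the
previous `q` tokens into the current token. -/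
theorem transformer_copies_previous_tokens (ε : ℝ) (hε : 0 < ε)
    (d q N : ℕ) (δ R : ℝ) (hδ : 0 < δ) (hR : 0 < R) (dp : ℕ)
    (p : ℤ → EuclideanSpace ℝ (Fin dp))
    (hpnorm : ∀ s : ℤ, -(q : ℤ) ≤ s → s ≤ (N : ℤ) → ‖p s‖ ≤ 1)
    (hpgap : ∀ s s' : ℤ, -(q : ℤ) ≤ s → s ≤ (N : ℤ) → -(q : ℤ) ≤ s' → s' ≤ (N : ℤ) →
      s ≠ s' → ⟪p s, p s⟫ > ⟪p s, p s'⟫ + δ) :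
    ∃ (dk F : ℕ)
      (WV : Fin q → Matrix (Row3 d q dp) (Row3 d q dp) ℝ)
      (WK WQ : Fin q → Matrix (Fin dk) (Row3 d q dp) ℝ)
      (W1 : Matrix (Fin F) (Row3 d q dp) ℝ) (b1 : Fin F → ℝ)
      (W2 : Matrix (Row3 d q dp) (Fin F) ℝ) (b2 : Row3 d q dp → ℝ),
      ∀ x : Fin (N + 1) → EuclideanSpace ℝ (Fin d),
        (∀ t, ‖x t‖ ≤ R) →
        ∀ (i : Row3 d q dp) (t : Fin (N + 1)),
          |tfLayer WV WK WQ W1 b1 W2 b2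
              (promptCopyIn (fun t r => x t r) (fun s r => p s r)) i t -
            promptCopyOut (fun t r => x t r) (fun s r => p s r) i t| ≤ ε := by
  classical
  set M : ℝ := 2 * R + 2 with hM
  set Aq : ℝ := ((N : ℝ) + 1) * (2 * R) / ε + 1 with hAq
  have hAqnn : 0 ≤ ((N : ℝ) + 1) * (2 * R) / ε := by positivity
  have hAq1 : (1 : ℝ) ≤ Aq := by rw [hAq]; linarith
  have hAq0 : (0 : ℝ) < Aq := by linarith
  set c : ℝ := δ⁻¹ * Real.log Aq with hc
  have hc0 : 0 ≤ c := by
    have h := Real.log_nonneg hAq1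
    rw [hc]; positivity
  have hexp : Real.exp (-(c * δ)) = Aq⁻¹ := by
    have h : c * δ = Real.log Aq := by
      rw [hc]; field_simp
    rw [h, Real.exp_neg, Real.exp_log hAq0]
  have hkey : ((N : ℝ) + 1) * (2 * R) * Real.exp (-(c * δ)) ≤ ε := by
    rw [hexp]
    have h2 : ((N : ℝ) + 1) * (2 * R) ≤ ε * Aq := by
      have h3 : ε * Aq = ((N : ℝ) + 1) * (2 * R) + ε := by
        rw [hAq]; field_simp
      rw [h3]; linarith
    calc ((N : ℝ) + 1) * (2 * R) * Aq⁻¹ ≤ (ε * Aq) * Aq⁻¹ :=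
          mul_le_mul_of_nonneg_right h2 (by positivity)
      _ = ε := by field_simp
  refine ⟨dp, q * d * 4, wV, (fun _ => wKmat), wQmat c, W1mat M, b1vec M, W2mat, 0, ?_⟩
  intro x hx i t
  set xr : Fin (N+1) → Fin d → ℝ := fun t r => x t r with hxr
  set pp : ℤ → Fin dp → ℝ := fun s r => p s r with hpp
  have hxb : ∀ (s : Fin (N+1)) (r : Fin d), |xr s r| ≤ R := by
    intro s r
    refine le_trans ?_ (hx s)
    rw [EuclideanSpace.norm_eq (x s)]
    have h1 : |xr s r| = Real.sqrt (‖xr s r‖^2) := by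
      rw [Real.sqrt_sq_eq_abs]; simp [Real.norm_eq_abs]
    rw [h1]
    exact Real.sqrt_le_sqrt (Finset.single_le_sum (f := fun j => ‖x s j‖^2)
      (fun j _ => sq_nonneg _) (Finset.mem_univ r))
  have hinner : ∀ a b : ℤ, (∑ j, pp a j * pp b j) = ⟪p a, p b⟫ := by
    intro a b
    rw [PiLp.inner_apply]
    simp [RCLike.inner_apply]
    exact Finset.sum_congr rfl fun j _ => mul_comm _ _
  show |TF (q:=q) M c xr pp i t - promptCopyOut (q:=q) xr pp i t| ≤ ε
  match i with
  | Sum.inl r =>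
    rw [TF_top]
    have h : promptCopyOut (q:=q) xr pp (Sum.inl r : Row3 d q dp) t = xr t r := rfl
    rw [h, sub_self, abs_zero]
    exact le_of_lt hε
  | Sum.inr (Sum.inr (Sum.inl (k, j))) =>
    rw [show (Sum.inr (Sum.inr (Sum.inl (k, j))) : Row3 d q dp) = rPos k j from rfl, TF_pos]
    have h : promptCopyOut (q:=q) xr pp (rPos k j) t = pp ((t : ℤ) - (k : ℤ)) j := rfl
    rw [h, sub_self, abs_zero]
    exact le_of_lt hε
  | Sum.inr (Sum.inr (Sum.inr u)) =>
    rw [show (Sum.inr (Sum.inr (Sum.inr u)) : Row3 d q dp) = rT from rfl, TF_t]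
    have h : promptCopyOut (q:=q) xr pp (rT (d:=d) (q:=q) (dp:=dp)) t = (t : ℝ) := rfl
    rw [h, sub_self, abs_zero]
    exact le_of_lt hε
  | Sum.inr (Sum.inl (k, r)) =>
    rw [show (Sum.inr (Sum.inl (k, r)) : Row3 d q dp) = rMid k r from rfl]
    have hmid : promptCopyOut (q:=q) xr pp (rMid k r) t
        = xext xr ((t : ℤ) - ((k : ℤ) + 1)) r := rfl
    rw [hmid]
    have hA : |A c xr pp (rMid k r) t| ≤ R := by
      rw [A_mid]
      calc |∑ s, xr s r * W c xr pp k s t| ≤ ∑ s, |xr s r * W c xr pp k s t| :=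
            Finset.abs_sum_le_sum_abs _ _
        _ ≤ ∑ s, R * W c xr pp k s t := by
            refine Finset.sum_le_sum fun s _ => ?_
            rw [abs_mul, abs_of_pos (W_pos c xr pp k s t)]
            exact mul_le_mul_of_nonneg_right (hxb s r) (le_of_lt (W_pos c xr pp k s t))
        _ = R := by rw [← Finset.mul_sum, W_sum, mul_one]
    rw [TF_mid]
    set av := A c xr pp (rMid k r) t with hav
    set v : ℝ := M * ((t : ℝ) + 1/2 - ((k : ℕ) + 1)) with hv
    by_cases hk : (k : ℕ) + 1 ≤ (t : ℕ)
    · -- in-range case : attention copies x_{t-k-1}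
      have hkR : ((k : ℕ) : ℝ) + 1 ≤ ((t : ℕ) : ℝ) := by exact_mod_cast hk
      have hvge : R + 1 ≤ v := by
        have h1 : (1:ℝ)/2 ≤ (t : ℝ) + 1/2 - ((k : ℕ) + 1) := by linarith
        have h2 : M * (1/2 : ℝ) ≤ v := by
          rw [hv]
          exact mul_le_mul_of_nonneg_left h1 (by rw [hM]; linarith)
        rw [hM] at h2; linarith
      have habs := abs_le.mp hA
      have e1 : max (av + v) 0 = av + v := max_eq_left (by linarith)
      have e2 : max v 0 = v := max_eq_left (by linarith)
      have hbr : av + (max (av + v) 0 - max v 0 - max av 0 + max (-av) 0) = av := by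
        rw [e1, e2]
        have h3 := max_zero_sub_max_neg_zero_eq_self av
        linarith
      rw [hbr]
      -- the target entry
      set sstar : Fin (N+1) := ⟨(t : ℕ) - ((k : ℕ) + 1), by omega⟩ with hsstar
      have hsz : ((sstar : ℕ) : ℤ) = (t : ℤ) - ((k : ℤ) + 1) := by
        rw [hsstar]; push_cast; omega
      have hout : xext xr ((t : ℤ) - ((k : ℤ) + 1)) r = xr sstar r := by
        have hcond : (0 : ℤ) ≤ (t : ℤ) - ((k : ℤ) + 1) ∧ (t : ℤ) - ((k : ℤ) + 1) < (N : ℤ) + 1 := by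
          constructor <;> omega
        simp only [xext]
        rw [dif_pos hcond]
        congr 1
        apply Fin.ext
        simp only [hsstar]
        omega
      rw [hout]
      -- concentration of the softmax weights
      have hwle : ∀ s : Fin (N+1), s ≠ sstar → W c xr pp k s t ≤ Real.exp (-(c * δ)) := by
        intro s hs
        refine le_trans (W_le c xr pp k s sstar t) (Real.exp_le_exp.mpr ?_)
        have hzz : ((sstar : ℕ) : ℤ) = (t : ℤ) - ((k : ℕ) + 1) := by
          rw [hsstar]; push_cast; omega
        rw [hinner, hinner, hzz]
        have hne : ((t : ℤ) - ((k : ℕ) + 1)) ≠ (s : ℤ) := by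
          intro hcontra
          apply hs
          apply Fin.ext
          omega
        have hgap := hpgap ((t : ℤ) - ((k : ℕ) + 1)) (s : ℤ)
          (by omega) (by omega) (by omega) (by omega) hne
        have hcomm : (⟪p (s : ℤ), p ((t : ℤ) - ((k : ℕ) + 1))⟫)
            = ⟪p ((t : ℤ) - ((k : ℕ) + 1)), p (s : ℤ)⟫ := real_inner_comm _ _
        have h4 : (⟪p (s : ℤ), p ((t : ℤ) - ((k : ℕ) + 1))⟫)
            - ⟪p ((t : ℤ) - ((k : ℕ) + 1)), p ((t : ℤ) - ((k : ℕ) + 1))⟫ ≤ -δ := by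
          rw [hcomm]; linarith
        have h5 := mul_le_mul_of_nonneg_left h4 hc0
        have h6 : c * (-δ) = -(c * δ) := by ring
        rw [h6] at h5
        linarith [h5]
      -- the error estimate
      have hdiff : av - xr sstar r = ∑ s, (xr s r - xr sstar r) * W c xr pp k s t := by
        have h1 : ∑ s, (xr s r - xr sstar r) * W c xr pp k s t
            = (∑ s, xr s r * W c xr pp k s t) - xr sstar r * ∑ s, W c xr pp k s t := by
          rw [Finset.mul_sum, ← Finset.sum_sub_distrib]
          exact Finset.sum_congr rfl fun s _ => by ring
        rw [h1, W_sum, mul_one, hav, A_mid]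
      rw [hdiff]
      calc |∑ s, (xr s r - xr sstar r) * W c xr pp k s t|
          ≤ ∑ s, |(xr s r - xr sstar r) * W c xr pp k s t| := Finset.abs_sum_le_sum_abs _ _
        _ ≤ ∑ s : Fin (N+1), 2 * R * Real.exp (-(c * δ)) := by
            refine Finset.sum_le_sum fun s _ => ?_
            by_cases hs : s = sstar
            · subst hs
              simp
              positivity
            · rw [abs_mul, abs_of_pos (W_pos c xr pp k s t)]
              have h1 : |xr s r - xr sstar r| ≤ 2 * R := by
                have h2 := hxb s r
                have h3 := hxb sstar r
                have h4 := abs_sub (xr s r) (xr sstar r)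
                linarith
              exact mul_le_mul h1 (hwle s hs) (le_of_lt (W_pos c xr pp k s t)) (by positivity)
        _ = ((N : ℝ) + 1) * (2 * R * Real.exp (-(c * δ))) := by
            rw [Finset.sum_const, Finset.card_univ, Fintype.card_fin, nsmul_eq_mul]
            push_cast
            ring
        _ ≤ ε := by
            have h7 : ((N : ℝ) + 1) * (2 * R * Real.exp (-(c * δ)))
                = ((N : ℝ) + 1) * (2 * R) * Real.exp (-(c * δ)) := by ring
            rw [h7]; exact hkey
    · -- out-of-range case : the FF layer zeroes out the entry
      have hkR : ((t : ℕ) : ℝ) ≤ ((k : ℕ) : ℝ) := by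
        have : (t : ℕ) ≤ (k : ℕ) := by omega
        exact_mod_cast this
      have habs := abs_le.mp hA
      have hvle : v ≤ -(R + 1) := by
        have h1 : (t : ℝ) + 1/2 - ((k : ℕ) + 1) ≤ -(1/2 : ℝ) := by linarith
        have h2 : v ≤ M * (-(1/2) : ℝ) := by
          rw [hv]
          exact mul_le_mul_of_nonneg_left h1 (by rw [hM]; linarith)
        rw [hM] at h2; linarith
      have e1 : max (av + v) 0 = 0 := max_eq_right (by linarith)
      have e2 : max v 0 = 0 := max_eq_right (by linarith)
      have hbr : av + (max (av + v) 0 - max v 0 - max av 0 + max (-av) 0) = 0 := by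
        rw [e1, e2]
        have h3 := max_zero_sub_max_neg_zero_eq_self av
        linarith
      rw [hbr]
      have hout : xext xr ((t : ℤ) - ((k : ℤ) + 1)) r = 0 := by
        have hcond : ¬((0 : ℤ) ≤ (t : ℤ) - ((k : ℤ) + 1) ∧ (t : ℤ) - ((k : ℤ) + 1) < (N : ℤ) + 1) := by
          omega
        simp only [xext]
        rw [dif_neg hcond]
        rfl
      rw [hout, sub_self, abs_zero]
      exact le_of_lt hε
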